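/- Let (z, w) be a unit vector with entries in Z[1/√2, i] and suppose sde(|z|², √2) ≥ 4. Then for any integer k, the value sde(|(z + wω^k)/√2|², √2) differs from sde(|z|², √2) by at most 1 in absolute value. -/

import Mathlib

noncomputable section

open Complex

/-- The eighth root of unity ω = e^{iπ/4}. -/
def omg : ℂ := Complex.exp (Real.pi * Complex.I / 4)

/-- √2 as a complex number. -/
def rt2 : ℂ := (Real.sqrt 2 : ℝ)

/-- Membership in the ring Z[ω] = {a + bω + cω² + dω³ : a,b,c,d ∈ ℤ}. -/
def Zomega (z : ℂ) : Prop :=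
  ∃ a b c d : ℤ, z = a + b * omg + c * omg ^ 2 + d * omg ^ 3

/-- Membership in the ring Z[1/√2, i] = {u/(√2)^n : u ∈ Z[ω], n ∈ ℕ}. -/
def ZRoot2i (z : ℂ) : Prop :=
  ∃ u : ℂ, Zomega u ∧ ∃ n : ℕ, z = u / rt2 ^ n

/-- `b` divides `z` within the ring Z[ω]. -/
def ZDvd (b z : ℂ) : Prop := ∃ q : ℂ, Zomega q ∧ z = b * q

/-- `k` is the greatest dividing exponent of base `b` with respect to `z`:
`b^k` divides `z` in Z[ω], while `b^(k+1)` does not. -/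
def IsGde (b z : ℂ) (k : ℕ) : Prop := ZDvd (b ^ k) z ∧ ¬ ZDvd (b ^ (k + 1)) z

/-- `k` is the smallest denominator exponent of base √2 with respect to `z`:
the smallest integer `k` such that `z·(√2)^k ∈ Z[ω]`. -/
def IsSde (z : ℂ) (k : ℤ) : Prop :=
  Zomega (z * rt2 ^ k) ∧ ∀ j : ℤ, Zomega (z * rt2 ^ j) → k ≤ j

/-!
Let `(x, y)` be a unit vector over `ℤ[1/√2, i]` and `t = x̄ y + x ȳ`, so that
`|(x + y)/√2|² = (1 + t)/2`. The prime `δ = 1 + ω` of `ℤ[ω]` satisfies `δ² ~ √2` and `δ̄ ~ δ`,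
hence `v_δ(x x̄) = 2 v_δ(x)`. So if `|x|² √2^m` and `|y|² √2^m = (1 - |x|²) √2^m` lie in `ℤ[ω]`
(`m ≥ 1`), then so does `x̄ y √2^m`, and its trace gains a factor: `t √2^(m-1) ∈ ℤ[ω]`. Hence
`sde |(x + y)/√2|² ≤ m + 1`. For `(z, w ω^k)` with `m = n` this gives `n' ≤ n + 1`. Since
`z = (z' + w')/√2` for `z' = (z + w ω^k)/√2`, `w' = (z - w ω^k)/√2`, taking `m = max n' 1` gives
`n ≤ max n' 1 + 1`, which for `n ≥ 4` is `n ≤ n' + 1`.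
-/

theorem emultiplicity_map_eq_of_associated {α F : Type*} [CommMonoid α] [EquivLike F α α]
    [MulEquivClass F α α] {σ : F} {p : α} (hσp : Associated (σ p) p) (x : α) :
    emultiplicity p (σ x) = emultiplicity p x :=
  (emultiplicity_eq_of_associated_left hσp).trans (emultiplicity_map_eq σ)

theorem pow_dvd_map_mul_of_pow_dvd_mul_map {α F : Type*} [CommMonoidWithZero α] [IsCancelMulZero α]
    [EquivLike F α α] [MulEquivClass F α α] {σ : F} {p : α} (hp : Prime p)
    (hσp : Associated (σ p) p) {x y : α} {r : ℕ}
    (hx : p ^ (2 * r) ∣ x * σ x) (hy : p ^ (2 * r) ∣ y * σ y) : p ^ (2 * r) ∣ σ x * y := by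
  rw [pow_dvd_iff_le_emultiplicity, emultiplicity_mul hp,
    emultiplicity_map_eq_of_associated hσp] at hx hy ⊢
  rcases le_total (emultiplicity p x) (emultiplicity p y) with h | h
  · exact hx.trans (add_le_add_right h _)
  · exact hy.trans (add_le_add_left h _)

lemma rt2_sq : rt2 ^ 2 = 2 := by
  rw [rt2, ← ofReal_pow, Real.sq_sqrt zero_le_two, ofReal_ofNat]

lemma rt2_ne_zero : rt2 ≠ 0 := by
  simp [rt2]

lemma conj_rt2 : starRingEnd ℂ rt2 = rt2 := conj_ofReal _

lemma omg_eq : omg = rt2 / 2 * (1 + I) := by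
  have : (Real.pi : ℂ) * I / 4 = ((Real.pi / 4 : ℝ) : ℂ) * I := by push_cast; ring
  rw [omg, this, exp_mul_I, ← ofReal_cos, ← ofReal_sin, Real.cos_pi_div_four,
    Real.sin_pi_div_four, rt2]
  push_cast
  ring

lemma omg_sq : omg ^ 2 = I := by
  rw [omg_eq]
  linear_combination (1 + 2 * I + I ^ 2) / 4 * rt2_sq + 1 / 2 * I_sq

lemma omg_pow_four : omg ^ 4 = -1 := by
  rw [show 4 = 2 * 2 from rfl, pow_mul, omg_sq, I_sq]

lemma omg_mul_conj : omg * starRingEnd ℂ omg = 1 := by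
  rw [omg_eq, map_mul, map_div₀, map_add, conj_rt2, conj_I, map_one, map_ofNat]
  linear_combination (1 - I ^ 2) / 4 * rt2_sq - 1 / 2 * I_sq

lemma conj_omg : starRingEnd ℂ omg = -omg ^ 3 := by
  linear_combination (-omg ^ 3) * omg_mul_conj + starRingEnd ℂ omg * omg_pow_four

lemma rt2_eq_omg_sub_omg_pow_three : rt2 = omg - omg ^ 3 := by
  rw [← neg_neg (omg ^ 3), ← conj_omg, sub_neg_eq_add, omg_eq]
  simp only [map_mul, map_div₀, map_add, conj_rt2, conj_I, map_one, map_ofNat]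
  ring

namespace Zomega

def subring : Subring ℂ where
  carrier := {z | Zomega z}
  mul_mem' := by
    rintro _ _ ⟨a, b, c, d, rfl⟩ ⟨a', b', c', d', rfl⟩
    refine ⟨a * a' - b * d' - c * c' - d * b', a * b' + b * a' - c * d' - d * c',
      a * c' + b * b' + c * a' - d * d', a * d' + b * c' + c * b' + d * a', ?_⟩
    push_cast
    linear_combination (b * d' + c * c' + d * b' + (c * d' + d * c') * omg + d * d' * omg ^ 2)
      * omg_pow_four
  one_mem' := ⟨1, 0, 0, 0, by simp⟩
  add_mem' := by
    rintro _ _ ⟨a, b, c, d, rfl⟩ ⟨a', b', c', d', rfl⟩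
    exact ⟨a + a', b + b', c + c', d + d', by push_cast; ring⟩
  zero_mem' := ⟨0, 0, 0, 0, by simp⟩
  neg_mem' := by
    rintro _ ⟨a, b, c, d, rfl⟩
    exact ⟨-a, -b, -c, -d, by push_cast; ring⟩

@[simp] lemma mem_subring {z : ℂ} : z ∈ subring ↔ Zomega z := Iff.rfl

lemma omg_mem : Zomega omg := ⟨0, 1, 0, 0, by simp⟩

lemma conj {z : ℂ} (hz : Zomega z) : Zomega (starRingEnd ℂ z) := by
  obtain ⟨a, b, c, d, rfl⟩ := hz
  refine ⟨a, -d, -c, -b, ?_⟩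
  simp only [map_add, map_mul, map_pow, map_intCast, conj_omg]
  push_cast
  linear_combination (c * omg ^ 2 - d * omg ^ 5 + d * omg) * omg_pow_four

lemma rt2_mem : Zomega rt2 := by
  rw [rt2_eq_omg_sub_omg_pow_three]
  exact subring.sub_mem omg_mem (subring.pow_mem omg_mem 3)

lemma omg_zpow (k : ℤ) : Zomega (omg ^ k) := by
  have hinv : omg⁻¹ = starRingEnd ℂ omg := eq_comm.mp (eq_inv_of_mul_eq_one_right omg_mul_conj)
  obtain ⟨j, rfl | rfl⟩ := Int.eq_nat_or_neg k
  · simpa using subring.pow_mem omg_mem j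
  · rw [zpow_neg, zpow_natCast, ← inv_pow, hinv]
    exact subring.pow_mem (conj omg_mem) j

lemma rt2_zpow {m : ℤ} (hm : 0 ≤ m) : Zomega (rt2 ^ m) := by
  lift m to ℕ using hm
  simpa using subring.pow_mem rt2_mem m

lemma mul_rt2_zpow_of_le {z : ℂ} {j k : ℤ} (h : Zomega (z * rt2 ^ j)) (hjk : j ≤ k) :
    Zomega (z * rt2 ^ k) := by
  have : z * rt2 ^ k = z * rt2 ^ j * rt2 ^ (k - j) := by
    rw [mul_assoc, ← zpow_add₀ rt2_ne_zero, add_sub_cancel]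
  rw [this]
  exact subring.mul_mem h (rt2_zpow (by omega))

lemma add_conj_div_rt2 {z : ℂ} (hz : Zomega z) : Zomega ((z + starRingEnd ℂ z) / rt2) := by
  obtain ⟨a, b, c, d, rfl⟩ := hz
  refine ⟨b - d, a, 0, -a, ?_⟩
  simp only [map_add, map_mul, map_pow, map_intCast, conj_omg]
  rw [div_eq_iff rt2_ne_zero, rt2_eq_omg_sub_omg_pow_three]
  push_cast
  linear_combination (2 * a + (c - a) * omg ^ 2 + d * omg - d * omg ^ 5) * omg_pow_four

lemma rt2_mul_ne_one {q : ℂ} (hq : Zomega q) : rt2 * q ≠ 1 := by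
  obtain ⟨a, b, c, d, rfl⟩ := hq
  intro h
  have hsplit : rt2 * (a + b * omg + c * omg ^ 2 + d * omg ^ 3) =
      ((Real.sqrt 2 * a + b - d : ℝ) : ℂ) + ((Real.sqrt 2 * c + b + d : ℝ) : ℂ) * I := by
    rw [pow_succ omg 2, omg_sq, omg_eq]
    push_cast
    rw [show ((Real.sqrt 2 : ℝ) : ℂ) = rt2 from rfl]
    linear_combination (b / 2 * (1 + I) + d / 2 * I * (1 + I)) * rt2_sq + d * I_sq
  rw [hsplit, Complex.ext_iff] at h
  simp only [add_re, add_im, ofReal_re, ofReal_im, mul_re, mul_im, I_re, I_im, one_re,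
    one_im] at h
  obtain ⟨hre, him⟩ := h
  have hirr {u v : ℤ} (huv : Real.sqrt 2 * u + v = 0) : u = 0 := by
    by_contra hu
    exact (irrational_sqrt_two.intCast_mul hu).ne_int (-v) (by push_cast; linarith)
  have ha : a = 0 := hirr (v := b - d - 1) (by push_cast; linarith)
  have hc : c = 0 := hirr (v := b + d) (by push_cast; linarith)
  subst ha hc
  norm_num at hre him
  have h1 : ((b - d : ℤ) : ℝ) = 1 := by push_cast; linarith
  have h2 : ((b + d : ℤ) : ℝ) = 0 := by push_cast; linarith
  norm_cast at h1 h2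
  omega

def ω : subring := ⟨omg, omg_mem⟩

def sqrt2 : subring := ⟨rt2, rt2_mem⟩

def δ : subring := 1 + ω

def conjEquiv : subring ≃+* subring :=
  RingEquiv.restrict starRingAut subring subring fun z => ⟨conj, fun h => by simpa using h.conj⟩

lemma coe_conjEquiv (z : subring) : (conjEquiv z : ℂ) = starRingEnd ℂ z := rfl

lemma associated_δ_sq_sqrt2 : Associated (δ ^ 2) sqrt2 := by
  refine ⟨Units.mkOfMulEqOne (1 - ω ^ 2 + ω ^ 3) (1 + ω + ω ^ 2) ?_, ?_⟩ <;> ext <;>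
    push_cast [Units.val_mkOfMulEqOne, δ, ω, sqrt2]
  · linear_combination omg * omg_pow_four
  · rw [rt2_eq_omg_sub_omg_pow_three]; linear_combination (1 + omg) * omg_pow_four

lemma associated_conjEquiv_δ : Associated (conjEquiv δ) δ := by
  refine ⟨Units.mkOfMulEqOne ω (-ω ^ 3) ?_, ?_⟩ <;> ext <;>
    push_cast [Units.val_mkOfMulEqOne, δ, ω, coe_conjEquiv, map_add, map_one]
  · linear_combination -omg_pow_four
  · linear_combination omg_mul_conj

lemma not_isUnit_sqrt2 : ¬ IsUnit sqrt2 := by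
  intro h
  obtain ⟨q, hq⟩ := isUnit_iff_exists_inv.mp h
  exact rt2_mul_ne_one q.2 (congrArg Subtype.val hq)

/-- Since `ω ≡ -1 [mod δ]` and `2 = δ (1 - ω + ω² - ω³)`, every element is `≡ 0` or `≡ 1`. -/
lemma δ_dvd_or_δ_dvd_sub_one (z : subring) : δ ∣ z ∨ δ ∣ z - 1 := by
  obtain ⟨_, a, b, c, d, rfl⟩ := z
  have key (e : ℤ) : (⟨_, a, b, c, d, rfl⟩ : subring) - (a - b + c - d - 2 * e : ℤ) =
      δ * (b + c * (ω - 1) + d * (ω ^ 2 - ω + 1) + e * (1 - ω + ω ^ 2 - ω ^ 3)) := by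
    ext
    rw [AddSubgroupClass.coe_sub, Subring.coe_intCast]
    push_cast [δ, ω]
    linear_combination e * omg_pow_four
  obtain ⟨e, he | he⟩ := Int.even_or_odd' (a - b + c - d)
  · left
    simpa [he] using Dvd.intro _ (key e).symm
  · right
    simpa [he] using Dvd.intro _ (key e).symm

lemma prime_δ : Prime δ := by
  have hunit : ¬ IsUnit δ := fun h =>
    not_isUnit_sqrt2 (associated_δ_sq_sqrt2.isUnit (h.pow 2))
  have hne : δ ≠ 0 := fun h => rt2_ne_zero <|
    congrArg Subtype.val (associated_δ_sq_sqrt2.eq_zero_iff.mp (by rw [h, zero_pow two_ne_zero]))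
  refine ⟨hne, hunit, fun a b hab => ?_⟩
  by_contra! hδ
  have ha := (δ_dvd_or_δ_dvd_sub_one a).resolve_left hδ.1
  have hb := (δ_dvd_or_δ_dvd_sub_one b).resolve_left hδ.2
  have h1 : (1 : subring) = a * b - ((a - 1) * (b - 1) + (a - 1) + (b - 1)) := by ring
  exact hunit (isUnit_of_dvd_one (h1 ▸ dvd_sub hab (dvd_add (dvd_add (ha.mul_right _) ha) hb)))

lemma sqrt2_pow_dvd_conj_mul {x y : subring} {r : ℕ} (hx : sqrt2 ^ r ∣ x * conjEquiv x)
    (hy : sqrt2 ^ r ∣ y * conjEquiv y) : sqrt2 ^ r ∣ conjEquiv x * y := by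
  have h : Associated (δ ^ (2 * r)) (sqrt2 ^ r) := by
    rw [pow_mul]
    exact associated_δ_sq_sqrt2.pow_pow
  rw [← h.dvd_iff_dvd_left] at hx hy ⊢
  exact pow_dvd_map_mul_of_pow_dvd_mul_map prime_δ associated_conjEquiv_δ hx hy

lemma conj_mul_mul_rt2_zpow {x y : ℂ} (hx : Zomega x) (hy : Zomega y) {s : ℤ}
    (hxs : Zomega (x * starRingEnd ℂ x * rt2 ^ s)) (hys : Zomega (y * starRingEnd ℂ y * rt2 ^ s)) :
    Zomega (starRingEnd ℂ x * y * rt2 ^ s) := by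
  obtain ⟨r, rfl | rfl⟩ := Int.eq_nat_or_neg s
  · exact subring.mul_mem (subring.mul_mem (conj hx) hy) (rt2_zpow (Int.natCast_nonneg r))
  have dvd_of_mem {z : ℂ} (hz : Zomega z) (hzs : Zomega (z * starRingEnd ℂ z * rt2 ^ (-r : ℤ))) :
      sqrt2 ^ r ∣ ⟨z, hz⟩ * conjEquiv ⟨z, hz⟩ :=
    ⟨⟨_, hzs⟩, by
      ext
      push_cast [sqrt2, coe_conjEquiv]
      rw [zpow_neg, zpow_natCast]
      field_simp [rt2_ne_zero]⟩
  obtain ⟨q, hq⟩ := sqrt2_pow_dvd_conj_mul (dvd_of_mem hx hxs) (dvd_of_mem hy hys)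
  have : starRingEnd ℂ x * y * rt2 ^ (-r : ℤ) = q := by
    have := congrArg Subtype.val hq
    push_cast [sqrt2, coe_conjEquiv] at this
    rw [this, zpow_neg, zpow_natCast]
    field_simp [rt2_ne_zero]
  exact this ▸ q.2

end Zomega

namespace ZRoot2i

def subring : Subring ℂ where
  carrier := {z | ZRoot2i z}
  mul_mem' := by
    rintro _ _ ⟨u, hu, a, rfl⟩ ⟨v, hv, b, rfl⟩
    exact ⟨u * v, Zomega.subring.mul_mem hu hv, a + b, by rw [pow_add, div_mul_div_comm]⟩
  one_mem' := ⟨1, Zomega.subring.one_mem, 0, by simp⟩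
  add_mem' := by
    rintro _ _ ⟨u, hu, a, rfl⟩ ⟨v, hv, b, rfl⟩
    refine ⟨u * rt2 ^ b + v * rt2 ^ a, Zomega.subring.add_mem
      (Zomega.subring.mul_mem hu (Zomega.subring.pow_mem Zomega.rt2_mem b))
      (Zomega.subring.mul_mem hv (Zomega.subring.pow_mem Zomega.rt2_mem a)), a + b, ?_⟩
    rw [pow_add]
    field_simp [rt2_ne_zero]
  zero_mem' := ⟨0, Zomega.subring.zero_mem, 0, by simp⟩
  neg_mem' := by
    rintro _ ⟨u, hu, a, rfl⟩
    exact ⟨-u, Zomega.subring.neg_mem hu, a, by ring⟩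

lemma of_zomega {z : ℂ} (hz : Zomega z) : ZRoot2i z := ⟨z, hz, 0, by simp⟩

lemma inv_rt2 : ZRoot2i rt2⁻¹ := ⟨1, Zomega.subring.one_mem, 1, by simp⟩

lemma exists_common_denom {x y : ℂ} (hx : ZRoot2i x) (hy : ZRoot2i y) :
    ∃ X Y : ℂ, ∃ N : ℤ, Zomega X ∧ Zomega Y ∧ x = X * rt2 ^ N ∧ y = Y * rt2 ^ N := by
  obtain ⟨X, hX, a, rfl⟩ := hx
  obtain ⟨Y, hY, b, rfl⟩ := hy
  refine ⟨X * rt2 ^ b, Y * rt2 ^ a, -(a + b : ℕ),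
    Zomega.subring.mul_mem hX (Zomega.subring.pow_mem Zomega.rt2_mem b),
    Zomega.subring.mul_mem hY (Zomega.subring.pow_mem Zomega.rt2_mem a), ?_, ?_⟩ <;>
  · rw [zpow_neg, zpow_natCast, pow_add]
    field_simp [rt2_ne_zero]

lemma conj_mul_mul_rt2_zpow {x y : ℂ} (hx : ZRoot2i x) (hy : ZRoot2i y) {m : ℤ}
    (hxm : Zomega (x * starRingEnd ℂ x * rt2 ^ m)) (hym : Zomega (y * starRingEnd ℂ y * rt2 ^ m)) :
    Zomega (starRingEnd ℂ x * y * rt2 ^ m) := by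
  obtain ⟨X, Y, N, hX, hY, rfl, rfl⟩ := exists_common_denom hx hy
  have e (U V : ℂ) : starRingEnd ℂ (U * rt2 ^ N) * (V * rt2 ^ N) * rt2 ^ m =
      starRingEnd ℂ U * V * rt2 ^ (2 * N + m) := by
    rw [map_mul, map_zpow₀, conj_rt2, two_mul, zpow_add₀ rt2_ne_zero, zpow_add₀ rt2_ne_zero]
    ring
  rw [mul_comm (X * _), e] at hxm
  rw [mul_comm (Y * _), e] at hym
  rw [e]
  exact Zomega.conj_mul_mul_rt2_zpow hX hY (by rwa [mul_comm X]) (by rwa [mul_comm Y])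

end ZRoot2i

lemma Zomega.mul_conj_add_div_rt2_mul_rt2_zpow {x y : ℂ} (hx : ZRoot2i x) (hy : ZRoot2i y)
    (hxy : x * starRingEnd ℂ x + y * starRingEnd ℂ y = 1) {m : ℤ} (hm : 1 ≤ m)
    (h : Zomega (x * starRingEnd ℂ x * rt2 ^ m)) :
    Zomega ((x + y) / rt2 * starRingEnd ℂ ((x + y) / rt2) * rt2 ^ (m + 1)) := by
  have hy' : Zomega (y * starRingEnd ℂ y * rt2 ^ m) := by
    rw [show y * starRingEnd ℂ y = 1 - x * starRingEnd ℂ x by linear_combination hxy, sub_mul,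
      one_mul]
    exact subring.sub_mem (rt2_zpow (by omega)) h
  have htr := add_conj_div_rt2 (ZRoot2i.conj_mul_mul_rt2_zpow hx hy h hy')
  have e : (x + y) / rt2 * starRingEnd ℂ ((x + y) / rt2) * rt2 ^ (m + 1) =
      rt2 ^ (m - 1) + (starRingEnd ℂ x * y * rt2 ^ m +
        starRingEnd ℂ (starRingEnd ℂ x * y * rt2 ^ m)) / rt2 := by
    have hm1 : rt2 ^ (m + 1) = rt2 ^ (m - 1) * rt2 ^ 2 := by
      rw [← zpow_natCast, ← zpow_add₀ rt2_ne_zero]; ring_nf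
    have hm0 : rt2 ^ m = rt2 ^ (m - 1) * rt2 := by
      rw [← zpow_add_one₀ rt2_ne_zero]; ring_nf
    simp only [map_div₀, map_add, map_mul, map_zpow₀, conj_rt2, conj_conj]
    rw [hm1, hm0, rt2_sq]
    field_simp [rt2_ne_zero]
    linear_combination 2 * hxy -
      (1 + x * starRingEnd ℂ y + y * starRingEnd ℂ x) * rt2_sq
  rw [e]
  exact subring.add_mem (rt2_zpow (by omega)) htr

/-- For a unit vector (z, w) over Z[1/√2, i] with sde(|z|², √2) ≥ 4, applying
H·T^k changes sde(|·|²) by at most 1. -/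
theorem stmt11 (z w : ℂ) (hz : ZRoot2i z) (hw : ZRoot2i w)
    (hunit : z * (starRingEnd ℂ) z + w * (starRingEnd ℂ) w = 1)
    (n : ℤ) (hn : IsSde (z * (starRingEnd ℂ) z) n) (h4 : 4 ≤ n)
    (k : ℤ) (n' : ℤ)
    (hn' : IsSde (((z + w * omg ^ k) / rt2) * (starRingEnd ℂ) ((z + w * omg ^ k) / rt2)) n') :
    |n' - n| ≤ 1 := by
  have hg : omg ^ k * starRingEnd ℂ (omg ^ k) = 1 := by
    rw [map_zpow₀, ← mul_zpow, omg_mul_conj, one_zpow]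
  have hwg : ZRoot2i (w * omg ^ k) :=
    ZRoot2i.subring.mul_mem hw (ZRoot2i.of_zomega (Zomega.omg_zpow k))
  have hunit_g : z * starRingEnd ℂ z + w * omg ^ k * starRingEnd ℂ (w * omg ^ k) = 1 := by
    rw [map_mul]
    linear_combination hunit + w * starRingEnd ℂ w * hg
  have h_le : n' ≤ n + 1 :=
    hn'.2 _ (Zomega.mul_conj_add_div_rt2_mul_rt2_zpow hz hwg hunit_g (by omega) hn.1)
  set z' := (z + w * omg ^ k) / rt2
  set w' := (z - w * omg ^ k) / rt2
  have hz' : ZRoot2i z' := ZRoot2i.subring.mul_mem (ZRoot2i.subring.add_mem hz hwg) ZRoot2i.inv_rt2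
  have hw' : ZRoot2i w' := ZRoot2i.subring.mul_mem (ZRoot2i.subring.sub_mem hz hwg) ZRoot2i.inv_rt2
  have hunit' : z' * starRingEnd ℂ z' + w' * starRingEnd ℂ w' = 1 := by
    simp only [z', w', map_div₀, map_add, map_sub, map_mul, conj_rt2]
    field_simp [rt2_ne_zero]
    linear_combination 2 * hunit + 2 * w * starRingEnd ℂ w * hg - rt2_sq
  have hzz : (z' + w') / rt2 = z := by
    rw [← add_div, div_div, ← sq, rt2_sq]
    ring
  have h_ge : n ≤ max n' 1 + 1 :=
    hn.2 _ <| hzz ▸ Zomega.mul_conj_add_div_rt2_mul_rt2_zpow hz' hw' hunit' (le_max_right _ _)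
      (Zomega.mul_rt2_zpow_of_le hn'.1 (le_max_left _ _))
  rw [abs_le]
  omega

end
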